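/- arXiv:2409.07219 — 3 statements merged into one kernel-verified Lean document; each statement's English description precedes it below -/
import Mathlib

section
/- Let f : Δ[0,T] → ℝ^{d×d} be continuous and suppose there is a constant K ≥ 0 such that |f(τ,t)| ≤ K ∫_t^T (|f(τ,s)| + |f(s,s)|) ds for all 0 ≤ τ ≤ t ≤ T. Then f ≡ 0 on Δ[0,T]. -/
/-!
Since `f` is continuous on the compact triangle, `‖f‖ ≤ C` there. Feeding a bound
`‖f(τ,s)‖ ≤ M (T - s)ⁿ`, valid for all `τ ≤ s` and in particular on the diagonal, into the
integral inequality gives `‖f(τ,t)‖ ≤ 2KM (T - t)ⁿ⁺¹ / (n + 1)`. Iterating,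
`‖f(τ,t)‖ ≤ C (2K(T - t))ⁿ / n!` for every `n`, and the right-hand side tends to `0`.
-/

open intervalIntegral Set Filter MeasureTheory

theorem isCompact_triangle (T : ℝ) :
    IsCompact {p : ℝ × ℝ | 0 ≤ p.1 ∧ p.1 ≤ p.2 ∧ p.2 ≤ T} := by
  have hclosed : IsClosed {p : ℝ × ℝ | 0 ≤ p.1 ∧ p.1 ≤ p.2 ∧ p.2 ≤ T} :=
    (isClosed_le continuous_const continuous_fst).inter
      ((isClosed_le continuous_fst continuous_snd).inter
        (isClosed_le continuous_snd continuous_const))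
  refine (isCompact_Icc (a := ((0, 0) : ℝ × ℝ)) (b := (T, T))).of_isClosed_subset hclosed ?_
  rintro ⟨a, b⟩ ⟨h0a, hab, hbT⟩
  exact ⟨⟨h0a, h0a.trans hab⟩, ⟨hab.trans hbT, hbT⟩⟩

section Triangle

variable {E : Type*} [TopologicalSpace E] {T : ℝ} {f : ℝ → ℝ → E}

theorem ContinuousOn.triangle_row
    (hf : ContinuousOn (fun p : ℝ × ℝ => f p.1 p.2) {p | 0 ≤ p.1 ∧ p.1 ≤ p.2 ∧ p.2 ≤ T})
    {τ : ℝ} (hτ : 0 ≤ τ) : ContinuousOn (f τ) (Icc τ T) :=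
  hf.comp (continuous_const.prodMk continuous_id).continuousOn fun _ hs => ⟨hτ, hs.1, hs.2⟩

theorem ContinuousOn.triangle_diag
    (hf : ContinuousOn (fun p : ℝ × ℝ => f p.1 p.2) {p | 0 ≤ p.1 ∧ p.1 ≤ p.2 ∧ p.2 ≤ T}) :
    ContinuousOn (fun s => f s s) (Icc 0 T) :=
  hf.comp (continuous_id.prodMk continuous_id).continuousOn fun _ hs => ⟨hs.1, le_rfl, hs.2⟩

end Triangle

theorem integral_sub_pow (t T : ℝ) (n : ℕ) :
    ∫ s in t..T, (T - s) ^ n = (T - t) ^ (n + 1) / (n + 1) := by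
  rw [integral_comp_sub_left (fun x : ℝ => x ^ n), integral_pow, sub_self, zero_pow n.succ_ne_zero,
    sub_zero]

theorem integral_le_of_le_mul_sub_pow {h : ℝ → ℝ} {t T c : ℝ} (n : ℕ) (htT : t ≤ T)
    (hh : IntervalIntegrable h volume t T) (hb : ∀ s ∈ Icc t T, h s ≤ c * (T - s) ^ n) :
    ∫ s in t..T, h s ≤ c * ((T - t) ^ (n + 1) / (n + 1)) := by
  have hpow : IntervalIntegrable (fun s => c * (T - s) ^ n) volume t T :=
    (by fun_prop : Continuous fun s : ℝ => c * (T - s) ^ n).intervalIntegrable t T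
  calc ∫ s in t..T, h s ≤ ∫ s in t..T, c * (T - s) ^ n := integral_mono_on htT hh hpow hb
    _ = c * ((T - t) ^ (n + 1) / (n + 1)) := by
      rw [intervalIntegral.integral_const_mul, integral_sub_pow]

theorem nonpos_of_forall_le_pow_div_factorial {a C x : ℝ}
    (h : ∀ n : ℕ, a ≤ C * x ^ n / n.factorial) : a ≤ 0 := by
  have hlim : Tendsto (fun n : ℕ => C * x ^ n / n.factorial) atTop (nhds 0) := by
    simpa [mul_div_assoc] using (FloorSemiring.tendsto_pow_div_factorial_atTop x).const_mul C
  exact ge_of_tendsto' hlim h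

section NonlocalGronwall

variable {T K C : ℝ} {u : ℝ → ℝ → ℝ}

theorem le_pow_div_factorial_of_le_integral (hK : 0 ≤ K)
    (hC : ∀ τ t, 0 ≤ τ → τ ≤ t → t ≤ T → u τ t ≤ C)
    (hint : ∀ τ t, 0 ≤ τ → τ ≤ t → t ≤ T →
      IntervalIntegrable (fun s => u τ s + u s s) volume t T)
    (hineq : ∀ τ t, 0 ≤ τ → τ ≤ t → t ≤ T → u τ t ≤ K * ∫ s in t..T, (u τ s + u s s))
    (n : ℕ) :
    ∀ τ t, 0 ≤ τ → τ ≤ t → t ≤ T → u τ t ≤ C * (2 * K * (T - t)) ^ n / n.factorial := by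
  induction n with
  | zero => simpa using hC
  | succ n ih =>
    intro τ t hτ hτt htT
    have hrepr : ∀ s, C * (2 * K * (T - s)) ^ n / n.factorial =
        C * (2 * K) ^ n / n.factorial * (T - s) ^ n := fun s => by rw [mul_pow]; ring
    have hb : ∀ s ∈ Icc t T,
        u τ s + u s s ≤ 2 * (C * (2 * K) ^ n / n.factorial) * (T - s) ^ n := by
      intro s ⟨hts, hsT⟩
      have hrow := ih τ s hτ (hτt.trans hts) hsT
      have hdiag := ih s s (hτ.trans (hτt.trans hts)) le_rfl hsT
      rw [hrepr] at hrow hdiag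
      linarith
    calc u τ t ≤ K * ∫ s in t..T, (u τ s + u s s) := hineq τ t hτ hτt htT
      _ ≤ K * (2 * (C * (2 * K) ^ n / n.factorial) * ((T - t) ^ (n + 1) / (n + 1))) :=
        mul_le_mul_of_nonneg_left
          (integral_le_of_le_mul_sub_pow n htT (hint τ t hτ hτt htT) hb) hK
      _ = C * (2 * K * (T - t)) ^ (n + 1) / (n + 1).factorial := by
        rw [Nat.factorial_succ, mul_pow, mul_pow (2 * K)]
        push_cast
        field_simp
        ring

theorem nonpos_of_le_integral (hK : 0 ≤ K)
    (hC : ∀ τ t, 0 ≤ τ → τ ≤ t → t ≤ T → u τ t ≤ C)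
    (hint : ∀ τ t, 0 ≤ τ → τ ≤ t → t ≤ T →
      IntervalIntegrable (fun s => u τ s + u s s) volume t T)
    (hineq : ∀ τ t, 0 ≤ τ → τ ≤ t → t ≤ T → u τ t ≤ K * ∫ s in t..T, (u τ s + u s s))
    {τ t : ℝ} (hτ : 0 ≤ τ) (hτt : τ ≤ t) (htT : t ≤ T) : u τ t ≤ 0 :=
  nonpos_of_forall_le_pow_div_factorial fun n =>
    le_pow_div_factorial_of_le_integral hK hC hint hineq n τ t hτ hτt htT

end NonlocalGronwall

/-- Nonlocal backward Gronwall-type uniqueness: if a continuous `f` on the triangle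
`Δ[0,T]` satisfies `|f(τ,t)| ≤ K ∫_t^T (|f(τ,s)| + |f(s,s)|) ds`, then `f ≡ 0`. -/
theorem nonlocal_gronwall_zero {E : Type*} [NormedAddCommGroup E]
    (T K : ℝ) (hK : 0 ≤ K) (f : ℝ → ℝ → E)
    (hf : ContinuousOn (fun p : ℝ × ℝ => f p.1 p.2)
      {p : ℝ × ℝ | 0 ≤ p.1 ∧ p.1 ≤ p.2 ∧ p.2 ≤ T})
    (hineq : ∀ τ t, 0 ≤ τ → τ ≤ t → t ≤ T →
      ‖f τ t‖ ≤ K * ∫ s in t..T, (‖f τ s‖ + ‖f s s‖)) :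
    ∀ τ t, 0 ≤ τ → τ ≤ t → t ≤ T → f τ t = 0 := by
  obtain ⟨C, hC⟩ := (isCompact_triangle T).exists_bound_of_continuousOn hf
  have hint : ∀ τ t, 0 ≤ τ → τ ≤ t → t ≤ T →
      IntervalIntegrable (fun s => ‖f τ s‖ + ‖f s s‖) volume t T := by
    intro τ t hτ hτt htT
    have hrow := (hf.triangle_row hτ).mono (Icc_subset_Icc_left hτt)
    have hdiag := hf.triangle_diag.mono (Icc_subset_Icc_left (hτ.trans hτt))
    exact ((hrow.norm.add hdiag.norm).mono (uIcc_of_le htT).subset).intervalIntegrable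
  intro τ t hτ hτt htT
  exact norm_le_zero_iff.mp <| nonpos_of_le_integral (u := fun τ t => ‖f τ t‖) hK
    (fun τ t hτ hτt htT => hC (τ, t) ⟨hτ, hτt, htT⟩) hint hineq hτ hτt htT
end

section
/- Exact solution of the mean-variance κ-equation: let ρ, θ, θ₀ : [0,T] → ℝ be continuous, θ(t) ≠ 0 and θ(t)² + θ₀(t)² > 0 for all t, λ : [0,T] → (0,∞) continuous, η > 0. Define Λ(τ;t) = (η/2)λ(T−τ)exp(∫_t^T (2r(s) − ρ(s)²/(θ(s)²+θ₀(s)²)) ds) and γ(τ;t) = −λ(T−τ)exp(∫_t^T r(s) ds) for continuous r. Then κ(τ;t) = −(1/(2η)) λ(T−τ) ∫_t^T (ρ(s)²/θ(s)²) exp( ∫_s^T ρ(v)²/(θ(v)²+θ₀(v)²) dv ) ds satisfies κ(τ;T) = 0 and κ'(τ;t) + (1/4)K₁(t,τ)γ(t;t)² − (1/2)K₂(t,τ)γ(t;t)γ(τ;t) = 0, where K₁(t,τ) = ρ(t)²θ(t)²Λ(τ;t)/(θ(t)²Λ(t;t))² and K₂(t,τ) = ρ(t)²/(θ(t)²Λ(t;t))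 (these are the formulas with β ≡ 0). -/
/-!
Writing `h = ρ²/(θ² + θ₀²)`, `κ(τ;·)` is a constant multiple of `t ↦ ∫_t^T (ρ²/θ²) e^{∫_s^T h} ds`,
so by the fundamental theorem of calculus its derivative is
`(1/(2η)) λ(T-τ) (ρ²/θ²)(t) e^{∫_t^T h}`.
Splitting `∫_t^T (2r - h) = 2∫_t^T r - ∫_t^T h`, the exponentials of `∫ r` cancel in both
`K₁ γ(t;t)²` and `K₂ γ(t;t) γ(τ;t)`, which become `(2/η) λ(T-τ)(ρ²/θ²)(t) e^{∫_t^T h}`;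
their combination with weights `1/4` and `-1/2` is the negated derivative.
-/

open Set intervalIntegral

section Primitive

variable {E : Type*} [NormedAddCommGroup E] [NormedSpace ℝ E] [CompleteSpace E]

theorem hasDerivWithinAt_integral_left_Icc {f : ℝ → E} {a b t : ℝ}
    (hf : ContinuousOn f (Icc a b)) (ht : t ∈ Icc a b) :
    HasDerivWithinAt (fun u => ∫ s in u..b, f s) (-f t) (Icc a b) t := by
  have : Fact (t ∈ Icc a b) := ⟨ht⟩
  exact integral_hasDerivWithinAt_left
    ((hf.mono (Icc_subset_Icc ht.1 le_rfl)).intervalIntegrable_of_Icc ht.2)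
    (hf.stronglyMeasurableAtFilter_nhdsWithin measurableSet_Icc t) (hf t ht)

theorem continuousOn_integral_left_Icc {f : ℝ → E} {a b : ℝ} (hf : ContinuousOn f (Icc a b)) :
    ContinuousOn (fun u => ∫ s in u..b, f s) (Icc a b) := fun _ ht =>
  (hasDerivWithinAt_integral_left_Icc hf ht).continuousWithinAt

end Primitive

theorem integral_const_mul_sub {f g : ℝ → ℝ} {a b : ℝ} (c : ℝ) (hf : ContinuousOn f (Icc a b))
    (hg : ContinuousOn g (Icc a b)) (hab : a ≤ b) :
    ∫ s in a..b, (c * f s - g s) = c * (∫ s in a..b, f s) - ∫ s in a..b, g s := by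
  rw [integral_sub ((hf.intervalIntegrable_of_Icc hab).const_mul c)
    (hg.intervalIntegrable_of_Icc hab), integral_const_mul]

theorem kappa_riccati_rhs_eq (η lt lτ ρ θ A B : ℝ) (hη : η ≠ 0) (hlt : lt ≠ 0) :
    1 / 4 * (ρ ^ 2 * θ ^ 2 * (η / 2 * lτ * Real.exp (2 * A - B)) /
        (θ ^ 2 * (η / 2 * lt * Real.exp (2 * A - B))) ^ 2) * (-lt * Real.exp A) ^ 2 -
      1 / 2 * (ρ ^ 2 / (θ ^ 2 * (η / 2 * lt * Real.exp (2 * A - B)))) *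
        (-lt * Real.exp A) * (-lτ * Real.exp A) =
    -(1 / (2 * η) * lτ * (ρ ^ 2 / θ ^ 2 * Real.exp B)) := by
  rw [Real.exp_sub, two_mul, Real.exp_add]
  have hA := Real.exp_ne_zero A
  have hB := Real.exp_ne_zero B
  rcases eq_or_ne θ 0 with rfl | hθ
  · -- both sides are `0` by the convention `x / 0 = 0`
    simp
  · field_simp
    ring

theorem mean_variance_kappa_solution_general (T : ℝ) (r ρ θ θ₀ lam : ℝ → ℝ) (η : ℝ) (hη : 0 < η)
    (hr : ContinuousOn r (Icc 0 T)) (hρ : ContinuousOn ρ (Icc 0 T))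
    (hθ : ContinuousOn θ (Icc 0 T)) (hθ₀ : ContinuousOn θ₀ (Icc 0 T))
    (hθne : ∀ t ∈ Icc (0 : ℝ) T, θ t ≠ 0)
    (hlam_pos : ∀ s ∈ Icc (0 : ℝ) T, 0 < lam s)
    (Λ γ : ℝ → ℝ → ℝ) (K₁ K₂ : ℝ → ℝ → ℝ) (κ : ℝ → ℝ → ℝ)
    (hΛ : ∀ τ t, Λ τ t = η / 2 * lam (T - τ) *
      Real.exp (∫ s in t..T, (2 * r s - ρ s ^ 2 / (θ s ^ 2 + θ₀ s ^ 2))))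
    (hγ : ∀ τ t, γ τ t = -lam (T - τ) * Real.exp (∫ s in t..T, r s))
    (hK₁ : ∀ t τ, K₁ t τ = ρ t ^ 2 * θ t ^ 2 * Λ τ t / (θ t ^ 2 * Λ t t) ^ 2)
    (hK₂ : ∀ t τ, K₂ t τ = ρ t ^ 2 / (θ t ^ 2 * Λ t t))
    (hκ : ∀ τ t, κ τ t = -(1 / (2 * η)) * lam (T - τ) *
      ∫ s in t..T, ρ s ^ 2 / θ s ^ 2 *
        Real.exp (∫ v in s..T, ρ v ^ 2 / (θ v ^ 2 + θ₀ v ^ 2)))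
    (τ : ℝ) (hτ : τ ∈ Icc (0 : ℝ) T) :
    κ τ T = 0 ∧
    ∀ t ∈ Icc τ T,
      HasDerivWithinAt (κ τ)
        (-(1 / 4 * K₁ t τ * γ t t ^ 2 - 1 / 2 * K₂ t τ * γ t t * γ τ t))
        (Icc τ T) t := by
  refine ⟨by simp [hκ], fun t ht => ?_⟩
  have htT : t ∈ Icc 0 T := Icc_subset_Icc hτ.1 le_rfl ht
  have hh : ContinuousOn (fun v => ρ v ^ 2 / (θ v ^ 2 + θ₀ v ^ 2)) (Icc 0 T) :=
    (hρ.pow 2).div ((hθ.pow 2).add (hθ₀.pow 2)) fun x hx =>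
      (add_pos_of_pos_of_nonneg (sq_pos_iff.2 (hθne x hx)) (sq_nonneg _)).ne'
  have hg : ContinuousOn (fun s => ρ s ^ 2 / θ s ^ 2 *
      Real.exp (∫ v in s..T, ρ v ^ 2 / (θ v ^ 2 + θ₀ v ^ 2))) (Icc 0 T) :=
    ((hρ.pow 2).div (hθ.pow 2) fun x hx => pow_ne_zero 2 (hθne x hx)).mul
      (continuousOn_integral_left_Icc hh).rexp
  have hderiv := ((hasDerivWithinAt_integral_left_Icc hg htT).const_mul
    (-(1 / (2 * η)) * lam (T - τ))).mono (Icc_subset_Icc hτ.1 le_rfl)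
  have hTt : T - t ∈ Icc (0 : ℝ) T := ⟨by linarith [htT.2], by linarith [htT.1]⟩
  rw [show κ τ = _ from funext (hκ τ), hK₁, hK₂, hΛ, hΛ, hγ, hγ,
    integral_const_mul_sub 2 (hr.mono (Icc_subset_Icc htT.1 le_rfl))
      (hh.mono (Icc_subset_Icc htT.1 le_rfl)) htT.2,
    kappa_riccati_rhs_eq _ _ _ _ _ _ _ hη.ne' (hlam_pos _ hTt).ne']
  exact hderiv.congr_deriv (by ring)

/-- Exact solution of the mean-variance κ-equation: with
`Λ(τ;t) = (η/2)λ(T-τ)exp(∫_t^T (2r - ρ²/(θ²+θ₀²)))`,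
`γ(τ;t) = -λ(T-τ)exp(∫_t^T r)`,
`K₁(t,τ) = ρ(t)²θ(t)²Λ(τ;t)/(θ(t)²Λ(t;t))²` and `K₂(t,τ) = ρ(t)²/(θ(t)²Λ(t;t))`,
the function `κ(τ;t) = -(1/(2η)) λ(T-τ) ∫_t^T (ρ²/θ²) exp(∫_s^T ρ²/(θ²+θ₀²)) ds`
satisfies `κ(τ;T) = 0` and `κ' + (1/4)K₁γ(t;t)² - (1/2)K₂γ(t;t)γ(τ;t) = 0` on `[τ,T]`. -/
theorem mean_variance_kappa_solution (T : ℝ) (r ρ θ θ₀ lam : ℝ → ℝ) (η : ℝ) (hη : 0 < η)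
    (hr : ContinuousOn r (Icc 0 T)) (hρ : ContinuousOn ρ (Icc 0 T))
    (hθ : ContinuousOn θ (Icc 0 T)) (hθ₀ : ContinuousOn θ₀ (Icc 0 T))
    (hθne : ∀ t ∈ Icc (0 : ℝ) T, θ t ≠ 0)
    (hnd : ∀ t ∈ Icc (0 : ℝ) T, 0 < θ t ^ 2 + θ₀ t ^ 2)
    (hlam : ContinuousOn lam (Icc 0 T)) (hlam_pos : ∀ s ∈ Icc (0 : ℝ) T, 0 < lam s)
    (Λ γ : ℝ → ℝ → ℝ) (K₁ K₂ : ℝ → ℝ → ℝ) (κ : ℝ → ℝ → ℝ)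
    (hΛ : ∀ τ t, Λ τ t = η / 2 * lam (T - τ) *
      Real.exp (∫ s in t..T, (2 * r s - ρ s ^ 2 / (θ s ^ 2 + θ₀ s ^ 2))))
    (hγ : ∀ τ t, γ τ t = -lam (T - τ) * Real.exp (∫ s in t..T, r s))
    (hK₁ : ∀ t τ, K₁ t τ = ρ t ^ 2 * θ t ^ 2 * Λ τ t / (θ t ^ 2 * Λ t t) ^ 2)
    (hK₂ : ∀ t τ, K₂ t τ = ρ t ^ 2 / (θ t ^ 2 * Λ t t))
    (hκ : ∀ τ t, κ τ t = -(1 / (2 * η)) * lam (T - τ) *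
      ∫ s in t..T, ρ s ^ 2 / θ s ^ 2 *
        Real.exp (∫ v in s..T, ρ v ^ 2 / (θ v ^ 2 + θ₀ v ^ 2)))
    (τ : ℝ) (hτ : τ ∈ Icc (0 : ℝ) T) :
    κ τ T = 0 ∧
    ∀ t ∈ Icc τ T,
      HasDerivWithinAt (κ τ)
        (-(1 / 4 * K₁ t τ * γ t t ^ 2 - 1 / 2 * K₂ t τ * γ t t * γ τ t))
        (Icc τ T) t :=
  mean_variance_kappa_solution_general T r ρ θ θ₀ lam η hη hr hρ hθ hθ₀ hθne hlam_pos Λ γ K₁ K₂ κ hΛ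
    hγ hK₁ hK₂ hκ τ hτ
end

section
/- Bound for the Picard iterate in the inter-bank Riccati equation: fix k > 0, continuous λ : [0,T] → (0,∞) continuously differentiable, constants c, q, η > 0, and a continuous function v : Δ[0,T] → ℝ. Let Λ̃(τ;·) be the solution on [τ,T] of Λ̃'(τ;t) − 2kΛ̃(τ;t) + 2λ(t−τ)v(t;t)² − 4v(τ;t)v(t;t) + (η/2 + kq)λ(t−τ) − (q/2)λ'(t−τ) = 0 with Λ̃(τ;T) = ((c+q)/2)λ(T−τ). Then there is a constant C, depending only on λ, c, q, η (and not on k or v), such that sup_{Δ[0,T]} |Λ̃| ≤ C(1 + (1/k)·sup_{Δ[0,T]} |v|²). -/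
/-!
Write the equation as `Λ̃' = 2kΛ̃ - A`. For the weight `w s = exp (2k (t - s))`, the product
`w Λ̃` has derivative `-w A`, so comparing it with a primitive of `w sup |A|` (the fencing
theorem, which needs no integrability of `A`) gives the variation-of-constants estimate
`|Λ̃(τ;t)| ≤ |Λ̃(τ;T)| + sup |A| · (1 - exp (-2k (T - t))) / (2k)`. The forcing `A` splits into
a part of size `O(|v|² + k)`, for which the weight factor is at most `1/(2k)`, and a part
independent of `k`, for which it is at most `T`.
-/

open Set Real

theorem abs_le_of_hasDerivWithinAt_linear {f A : ℝ → ℝ} {a b κ M : ℝ}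
    (hab : a ≤ b) (hκ : 0 < κ)
    (hf : ∀ x ∈ Icc a b, HasDerivWithinAt f (κ * f x - A x) (Icc a b) x)
    (hA : ∀ x ∈ Icc a b, |A x| ≤ M) :
    |f a| ≤ |f b| + M * ((1 - exp (-(κ * (b - a)))) / κ) := by
  set w : ℝ → ℝ := fun x => exp (κ * (a - x))
  have hw : ∀ x, HasDerivAt w (-κ * w x) x := fun x => by
    simpa [w, mul_comm] using ((hasDerivAt_id x).const_sub a |>.const_mul κ).exp
  have hwf : ∀ x ∈ Icc a b,
      HasDerivWithinAt (fun y => w y * f y - f a) (-(w x * A x)) (Icc a b) x := fun x hx =>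
    (((hw x).hasDerivWithinAt.mul (hf x hx)).sub_const (f a)).congr_deriv (by ring)
  have hbound : ∀ x, HasDerivAt (fun y => M * (1 - w y) / κ) (M * w x) x := fun x =>
    ((((hw x).const_sub 1).const_mul M).div_const κ).congr_deriv (by field_simp)
  have fence := image_norm_le_of_norm_deriv_right_le_deriv_boundary
    (fun x hx => (hwf x hx).continuousWithinAt)
    (fun x hx => (hwf x (Ico_subset_Icc_self hx)).mono_of_mem_nhdsWithin
      (Icc_mem_nhdsGE_of_mem hx))
    (by simp [w]) hbound
    (fun x hx => by
      rw [norm_neg, norm_mul, Real.norm_eq_abs, Real.norm_eq_abs, abs_of_pos (exp_pos _),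
        mul_comm M]
      exact mul_le_mul_of_nonneg_left (hA x (Ico_subset_Icc_self hx)) (exp_pos _).le)
    (right_mem_Icc.2 hab)
  have hwb : w b = exp (-(κ * (b - a))) := by simp only [w]; ring_nf
  have hwfb : |w b * f b| ≤ |f b| := by
    rw [abs_mul, abs_of_pos (exp_pos _)]
    exact mul_le_of_le_one_left (abs_nonneg _) (exp_le_one_iff.2 (by nlinarith))
  rw [Real.norm_eq_abs] at fence
  rw [← hwb, mul_div_assoc']
  linarith [abs_sub_abs_le_abs_sub (f a) (w b * f b), abs_sub_comm (w b * f b) (f a)]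

theorem abs_le_of_hasDerivWithinAt_linear_of_abs_le_add {f A : ℝ → ℝ} {a b κ P Q : ℝ}
    (hab : a ≤ b) (hκ : 0 < κ)
    (hf : ∀ x ∈ Icc a b, HasDerivWithinAt f (κ * f x - A x) (Icc a b) x)
    (hA : ∀ x ∈ Icc a b, |A x| ≤ P + Q) (hP : 0 ≤ P) (hQ : 0 ≤ Q) :
    |f a| ≤ |f b| + P / κ + Q * (b - a) := by
  have hweight : (1 - exp (-(κ * (b - a)))) / κ ≤ 1 / κ :=
    div_le_div_of_nonneg_right (by linarith [exp_pos (-(κ * (b - a)))]) hκ.le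
  have hweight' : (1 - exp (-(κ * (b - a)))) / κ ≤ b - a := by
    rw [div_le_iff₀ hκ]; linarith [add_one_le_exp (-(κ * (b - a)))]
  calc |f a| ≤ |f b| + (P + Q) * ((1 - exp (-(κ * (b - a)))) / κ) :=
        abs_le_of_hasDerivWithinAt_linear hab hκ hf hA
    _ ≤ |f b| + (P * (1 / κ) + Q * (b - a)) := by
        rw [add_mul]; gcongr
    _ = |f b| + P / κ + Q * (b - a) := by ring

theorem abs_riccati_forcing_le {l l' x y B₁ B₂ V k q η : ℝ}
    (hk : 0 ≤ k) (hq : 0 ≤ q) (hη : 0 ≤ η)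
    (hl : |l| ≤ B₁) (hl' : |l'| ≤ B₂) (hx : |x| ≤ V) (hy : |y| ≤ V) :
    |2 * l * x ^ 2 - 4 * y * x + (η / 2 + k * q) * l - q / 2 * l'|
      ≤ (2 * B₁ + 4) * V ^ 2 + k * q * B₁ + (η * B₁ + q * B₂) / 2 := by
  have h₁ : |2 * l * x ^ 2| ≤ 2 * B₁ * V ^ 2 := by
    rw [abs_mul, abs_mul, abs_pow, abs_two]; gcongr; linarith [abs_nonneg l]
  have h₂ : |4 * y * x| ≤ 4 * V * V := by
    rw [abs_mul, abs_mul, abs_of_pos four_pos]; gcongr; linarith [abs_nonneg y]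
  have h₃ : |(η / 2 + k * q) * l| ≤ (η / 2 + k * q) * B₁ := by
    rw [abs_mul, abs_of_nonneg (by positivity)]; gcongr
  have h₄ : |q / 2 * l'| ≤ q / 2 * B₂ := by
    rw [abs_mul, abs_of_nonneg (by positivity)]; gcongr
  rw [abs_le] at h₁ h₂ h₃ h₄ ⊢
  constructor <;> nlinarith

theorem abs_picard_iterate_le {T c q η k B₁ B₂ Mv τ t : ℝ} {lam lam' : ℝ → ℝ}
    {v Λ : ℝ → ℝ → ℝ} (hcq : 0 ≤ c + q) (hq : 0 ≤ q) (hη : 0 ≤ η) (hk : 0 < k)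
    (hB₁ : ∀ s ∈ Icc 0 T, |lam s| ≤ B₁) (hB₂ : ∀ s ∈ Icc 0 T, |lam' s| ≤ B₂)
    (hΛ : ∀ s ∈ Icc τ T, ∃ L' : ℝ, HasDerivWithinAt (Λ τ) L' (Icc τ T) s ∧
      L' - 2 * k * Λ τ s + 2 * lam (s - τ) * v s s ^ 2 - 4 * v τ s * v s s
        + (η / 2 + k * q) * lam (s - τ) - q / 2 * lam' (s - τ) = 0)
    (hΛT : Λ τ T = (c + q) / 2 * lam (T - τ))
    (hv : ∀ τ t, 0 ≤ τ → τ ≤ t → t ≤ T → |v τ t| ≤ Mv)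
    (hτ : 0 ≤ τ) (hτt : τ ≤ t) (htT : t ≤ T) :
    |Λ τ t| ≤ (c + q) / 2 * B₁ + ((B₁ + 2) * (1 / k * Mv ^ 2) + q / 2 * B₁)
      + (η * B₁ + q * B₂) / 2 * (T - t) := by
  have hlag : ∀ s ∈ Icc t T, s - τ ∈ Icc 0 T := fun s hs =>
    ⟨by linarith [hs.1], by linarith [hs.2]⟩
  have hB₁0 : 0 ≤ B₁ := (abs_nonneg _).trans (hB₁ _ (hlag T ⟨htT, le_rfl⟩))
  have hB₂0 : 0 ≤ B₂ := (abs_nonneg _).trans (hB₂ _ (hlag T ⟨htT, le_rfl⟩))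
  set A := fun s => 2 * lam (s - τ) * v s s ^ 2 - 4 * v τ s * v s s
    + (η / 2 + k * q) * lam (s - τ) - q / 2 * lam' (s - τ)
  have hderiv : ∀ s ∈ Icc t T,
      HasDerivWithinAt (Λ τ) (2 * k * Λ τ s - A s) (Icc t T) s := by
    intro s hs
    obtain ⟨L', hL', hode⟩ := hΛ s ⟨hτt.trans hs.1, hs.2⟩
    exact (hL'.mono (Icc_subset_Icc_left hτt)).congr_deriv (by simp only [A]; linarith)
  have hforcing : ∀ s ∈ Icc t T,
      |A s| ≤ ((2 * B₁ + 4) * Mv ^ 2 + k * q * B₁) + (η * B₁ + q * B₂) / 2 := fun s hs =>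
    abs_riccati_forcing_le hk.le hq hη (hB₁ _ (hlag s hs)) (hB₂ _ (hlag s hs))
      (hv s s (by linarith [hs.1]) le_rfl hs.2) (hv τ s hτ (hτt.trans hs.1) hs.2)
  have hbackward := abs_le_of_hasDerivWithinAt_linear_of_abs_le_add htT (by positivity) hderiv
    hforcing (by positivity) (by positivity)
  have hterminal : |Λ τ T| ≤ (c + q) / 2 * B₁ := by
    rw [hΛT, abs_mul, abs_of_nonneg (by positivity)]
    exact mul_le_mul_of_nonneg_left (hB₁ _ (hlag T ⟨htT, le_rfl⟩)) (by positivity)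
  have hdamped : ((2 * B₁ + 4) * Mv ^ 2 + k * q * B₁) / (2 * k)
      = (B₁ + 2) * (1 / k * Mv ^ 2) + q / 2 * B₁ := by
    field_simp; ring
  linarith

theorem interbank_picard_bound_general (T : ℝ) (hT : 0 ≤ T) (lam lam' : ℝ → ℝ)
    (hlam : ∀ s, HasDerivAt lam (lam' s) s)
    (hlam' : Continuous lam')
    (c q η : ℝ) (hc : 0 < c) (hq : 0 < q) (hη : 0 < η) :
    ∃ C : ℝ, 0 < C ∧
      ∀ k : ℝ, 0 < k →
      ∀ v : ℝ → ℝ → ℝ,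
        ContinuousOn (fun p : ℝ × ℝ => v p.1 p.2)
          {p : ℝ × ℝ | 0 ≤ p.1 ∧ p.1 ≤ p.2 ∧ p.2 ≤ T} →
      ∀ Λ : ℝ → ℝ → ℝ,
        (∀ τ t, 0 ≤ τ → τ ≤ t → t ≤ T →
          ∃ L' : ℝ, HasDerivWithinAt (Λ τ) L' (Icc τ T) t ∧
            L' - 2 * k * Λ τ t + 2 * lam (t - τ) * v t t ^ 2 - 4 * v τ t * v t t
              + (η / 2 + k * q) * lam (t - τ) - q / 2 * lam' (t - τ) = 0) →
        (∀ τ ∈ Icc (0 : ℝ) T, Λ τ T = (c + q) / 2 * lam (T - τ)) →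
      ∀ Mv : ℝ, 0 ≤ Mv →
        (∀ τ t, 0 ≤ τ → τ ≤ t → t ≤ T → |v τ t| ≤ Mv) →
        ∀ τ t, 0 ≤ τ → τ ≤ t → t ≤ T →
          |Λ τ t| ≤ C * (1 + 1 / k * Mv ^ 2) := by
  obtain ⟨B₁, hB₁⟩ := isCompact_Icc.exists_bound_of_continuousOn
    ((continuous_iff_continuousAt.2 fun s => (hlam s).continuousAt).continuousOn
      (s := Icc 0 T))
  obtain ⟨B₂, hB₂⟩ :=
    isCompact_Icc.exists_bound_of_continuousOn (hlam'.continuousOn (s := Icc 0 T))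
  have hB₁0 : 0 ≤ B₁ := (norm_nonneg _).trans (hB₁ 0 ⟨le_rfl, hT⟩)
  have hB₂0 : 0 ≤ B₂ := (norm_nonneg _).trans (hB₂ 0 ⟨le_rfl, hT⟩)
  set C₀ := (c + q) / 2 * B₁ + q / 2 * B₁ + (η * B₁ + q * B₂) / 2 * T with hC₀_def
  have hC₀ : 0 ≤ C₀ := by positivity
  refine ⟨C₀ + (B₁ + 2), by positivity, ?_⟩
  intro k hk v _ Λ hΛ hΛT Mv _ hv τ t hτ hτt htT
  have hX : 0 ≤ 1 / k * Mv ^ 2 := by positivity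
  calc |Λ τ t| ≤ (c + q) / 2 * B₁ + ((B₁ + 2) * (1 / k * Mv ^ 2) + q / 2 * B₁)
        + (η * B₁ + q * B₂) / 2 * (T - t) :=
        abs_picard_iterate_le (by positivity) hq.le hη.le hk hB₁ hB₂
          (fun s hs => hΛ τ s hτ hs.1 hs.2) (hΛT τ ⟨hτ, hτt.trans htT⟩) hv hτ hτt htT
    _ ≤ C₀ + (B₁ + 2) * (1 / k * Mv ^ 2) := by
        nlinarith [mul_nonneg (by positivity : 0 ≤ (η * B₁ + q * B₂) / 2) (hτ.trans hτt)]
    _ ≤ (C₀ + (B₁ + 2)) * (1 + 1 / k * Mv ^ 2) := by nlinarith [mul_nonneg hC₀ hX]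

/-- Bound for the Picard iterate in the inter-bank Riccati equation: there is a constant
`C > 0` depending only on `λ`, `c`, `q`, `η` (not on `k` or `v`) such that the solution
`Λ̃(τ;·)` of
`Λ̃' - 2kΛ̃ + 2λ(t-τ)v(t;t)² - 4v(τ;t)v(t;t) + (η/2 + kq)λ(t-τ) - (q/2)λ'(t-τ) = 0`,
`Λ̃(τ;T) = ((c+q)/2)λ(T-τ)`, satisfies `sup |Λ̃| ≤ C(1 + (1/k) sup |v|²)` on the
triangle `Δ[0,T]`. -/
theorem interbank_picard_bound (T : ℝ) (hT : 0 ≤ T) (lam lam' : ℝ → ℝ)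
    (hlam : ∀ s, HasDerivAt lam (lam' s) s)
    (hlam' : Continuous lam')
    (hlam_pos : ∀ s ∈ Icc (0 : ℝ) T, 0 < lam s)
    (c q η : ℝ) (hc : 0 < c) (hq : 0 < q) (hη : 0 < η) :
    ∃ C : ℝ, 0 < C ∧
      ∀ k : ℝ, 0 < k →
      ∀ v : ℝ → ℝ → ℝ,
        ContinuousOn (fun p : ℝ × ℝ => v p.1 p.2)
          {p : ℝ × ℝ | 0 ≤ p.1 ∧ p.1 ≤ p.2 ∧ p.2 ≤ T} →
      ∀ Λ : ℝ → ℝ → ℝ,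
        (∀ τ t, 0 ≤ τ → τ ≤ t → t ≤ T →
          ∃ L' : ℝ, HasDerivWithinAt (Λ τ) L' (Icc τ T) t ∧
            L' - 2 * k * Λ τ t + 2 * lam (t - τ) * v t t ^ 2 - 4 * v τ t * v t t
              + (η / 2 + k * q) * lam (t - τ) - q / 2 * lam' (t - τ) = 0) →
        (∀ τ ∈ Icc (0 : ℝ) T, Λ τ T = (c + q) / 2 * lam (T - τ)) →
      ∀ Mv : ℝ, 0 ≤ Mv →
        (∀ τ t, 0 ≤ τ → τ ≤ t → t ≤ T → |v τ t| ≤ Mv) →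
        ∀ τ t, 0 ≤ τ → τ ≤ t → t ≤ T →
          |Λ τ t| ≤ C * (1 + 1 / k * Mv ^ 2) :=
  interbank_picard_bound_general T hT lam lam' hlam hlam' c q η hc hq hη
end
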